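/- If p_1 < p_2 are primes with p_1 > 8, then the square of side length n = p_1²·p_2 has no perfect Mondrian partition into k ≥ p_1 rectangles; likewise, if p_1 < p_2 are primes with p_1 > 6, then the square of side length n = p_1·p_2² has no perfect Mondrian partition into k ≥ p_1 rectangles. -/

import Mathlib

/-- An axis-aligned rectangle with integer coordinates placed on the grid:
lower-left corner `(x, y)`, width `w`, and height `h`. -/
structure Rect where
  x : ℕ
  y : ℕ
  w : ℕ
  h : ℕ
deriving DecidableEq

/-- The area of a rectangle. -/
def Rect.area (r : Rect) : ℕ := r.w * r.h

/-- Two rectangles are congruent if they have the same dimensions,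
possibly after a ninety-degree rotation. -/
def Rect.Congruent (r s : Rect) : Prop :=
  (r.w = s.w ∧ r.h = s.h) ∨ (r.w = s.h ∧ r.h = s.w)

/-- The rectangle `r` covers the unit grid cell `[i, i+1) × [j, j+1)`. -/
def Rect.Covers (r : Rect) (i j : ℕ) : Prop :=
  r.x ≤ i ∧ i < r.x + r.w ∧ r.y ≤ j ∧ j < r.y + r.h

/-- A Mondrian partition of the `n × n` square: a finite collection of
pairwise non-congruent rectangles with positive integer side lengths that
tile the square (every cell of the square is covered by exactly one
rectangle, and rectangles lie inside the square). -/
structure Mondrian (n : ℕ) where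
  rects : Finset Rect
  pos : ∀ r ∈ rects, 0 < r.w ∧ 0 < r.h
  inside : ∀ r ∈ rects, r.x + r.w ≤ n ∧ r.y + r.h ≤ n
  cover : ∀ i j : ℕ, i < n → j < n → ∃! r : Rect, r ∈ rects ∧ r.Covers i j
  noncong : ∀ r ∈ rects, ∀ s ∈ rects, r ≠ s → ¬ r.Congruent s

/-- The defect of a Mondrian partition: the difference between the largest
and the smallest rectangle areas. -/
def Mondrian.defect {n : ℕ} (P : Mondrian n) : ℕ :=
  P.rects.sup fun r => P.rects.sup fun s => r.area - s.area

/-- A Mondrian partition is perfect if all its rectangles have the same area. -/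
def Mondrian.IsPerfect {n : ℕ} (P : Mondrian n) : Prop :=
  ∀ r ∈ P.rects, ∀ s ∈ P.rects, r.area = s.area

/-- `mondrianDk n k` is the minimum defect over all Mondrian partitions of the
`n × n` square using exactly `k` rectangles. -/
noncomputable def mondrianDk (n k : ℕ) : ℕ :=
  sInf {d | ∃ P : Mondrian n, P.rects.card = k ∧ P.defect = d}

/-- `mondrianD n` is the minimum defect over all Mondrian partitions of the
`n × n` square (into at least two rectangles). -/
noncomputable def mondrianD (n : ℕ) : ℕ :=
  sInf {d | ∃ P : Mondrian n, 2 ≤ P.rects.card ∧ P.defect = d}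

/-!
All rectangles of a perfect partition of the `n × n` square into `k` pieces have the same area
`a`, with `a * k = n²`. Sorting the sides of each rectangle gives a factorisation `a = d * e` with
`d ≤ e`, and non-congruent rectangles give different factorisations, so `2k ≤ τ(a) + 1`. For
`k ≥ 2` the area `a` is a proper divisor of `n² = p^i q^j`, hence divides `p^(i-1) q^j` or
`p^i q^(j-1)`; for `n² = p₁⁴ p₂²` and `n² = p₁² p₂⁴` this gives `τ(a) ≤ 12`, so `k ≤ 6 < p₁`.
-/

open Finset

def Rect.cells (r : Rect) : Finset (ℕ × ℕ) :=
  Ico r.x (r.x + r.w) ×ˢ Ico r.y (r.y + r.h)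

lemma Rect.mem_cells {r : Rect} {c : ℕ × ℕ} : c ∈ r.cells ↔ r.Covers c.1 c.2 := by
  simp [Rect.cells, Rect.Covers, and_assoc]

lemma Rect.card_cells (r : Rect) : #r.cells = r.area := by
  simp [Rect.cells, Rect.area]

def Rect.shape (r : Rect) : ℕ × ℕ := (min r.w r.h, max r.w r.h)

lemma Rect.congruent_of_shape_eq {r s : Rect} (h : r.shape = s.shape) : r.Congruent s := by
  simp only [Rect.shape, Prod.mk.injEq] at h
  unfold Rect.Congruent
  omega

lemma Rect.shape_mem_divisorsAntidiagonal {r : Rect} (h : r.area ≠ 0) :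
    r.shape ∈ r.area.divisorsAntidiagonal :=
  Nat.mem_divisorsAntidiagonal.mpr ⟨min_mul_max r.w r.h, h⟩

lemma Rect.shape_fst_le_snd (r : Rect) : r.shape.1 ≤ r.shape.2 := min_le_max

namespace Mondrian

variable {n : ℕ} (P : Mondrian n)

lemma biUnion_cells : P.rects.biUnion Rect.cells = range n ×ˢ range n := by
  ext c
  simp only [mem_biUnion, Rect.mem_cells, mem_product, mem_range]
  constructor
  · rintro ⟨r, hr, -, hx, -, hy⟩
    exact ⟨hx.trans_le (P.inside r hr).1, hy.trans_le (P.inside r hr).2⟩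
  · rintro ⟨hx, hy⟩
    obtain ⟨r, ⟨hr, hc⟩, -⟩ := P.cover c.1 c.2 hx hy
    exact ⟨r, hr, hc⟩

lemma pairwiseDisjoint_cells : (P.rects : Set Rect).PairwiseDisjoint Rect.cells := by
  intro r hr s hs hrs
  refine disjoint_left.mpr fun c hcr hcs => hrs ?_
  rw [Rect.mem_cells] at hcr hcs
  obtain ⟨u, -, hu⟩ := P.cover c.1 c.2 (hcr.2.1.trans_le (P.inside r hr).1)
    (hcr.2.2.2.trans_le (P.inside r hr).2)
  exact (hu r ⟨hr, hcr⟩).trans (hu s ⟨hs, hcs⟩).symm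

lemma sum_area : ∑ r ∈ P.rects, r.area = n * n := by
  simp_rw [← Rect.card_cells]
  rw [← card_biUnion P.pairwiseDisjoint_cells, biUnion_cells, card_product, card_range]

end Mondrian

lemma Nat.card_divisorsAntidiagonal (a : ℕ) : #a.divisorsAntidiagonal = #a.divisors := by
  rw [← Nat.map_div_right_divisors, card_map]

/-- Swapping the factors is an involution on the factorisations of `a` whose only possible
fixed point is `(√a, √a)`. -/
lemma Nat.two_mul_card_filter_fst_le_snd_le (a : ℕ) :
    2 * #{x ∈ a.divisorsAntidiagonal | x.1 ≤ x.2} ≤ #a.divisors + 1 := by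
  set L := {x ∈ a.divisorsAntidiagonal | x.1 ≤ x.2}
  set U := {x ∈ a.divisorsAntidiagonal | x.2 ≤ x.1}
  have hswap : #U = #L :=
    card_nbij' Prod.swap Prod.swap (fun x hx => by simpa [L, U, mul_comm] using hx)
      (fun x hx => by simpa [L, U, mul_comm] using hx) (fun x _ => x.swap_swap)
      (fun x _ => x.swap_swap)
  have hunion : L ∪ U = a.divisorsAntidiagonal := by
    rw [← filter_or]
    exact filter_true_of_mem fun x _ => le_total x.1 x.2
  have hdiag : #(L ∩ U) ≤ 1 := by
    refine card_le_one.mpr fun x hx y hy => ?_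
    simp only [L, U, mem_inter, mem_filter, Nat.mem_divisorsAntidiagonal] at hx hy
    have hx₁ : x.1 = x.2 := le_antisymm hx.1.2 hx.2.2
    have hy₁ : y.1 = y.2 := le_antisymm hy.1.2 hy.2.2
    have hxy : x.1 = y.1 := by
      rw [← Nat.mul_self_inj]
      calc x.1 * x.1 = x.1 * x.2 := by rw [hx₁]
        _ = y.1 * y.2 := hx.1.1.1.trans hy.1.1.1.symm
        _ = y.1 * y.1 := by rw [hy₁]
    exact Prod.ext hxy (by rw [← hx₁, ← hy₁, hxy])
  have := card_union_add_card_inter L U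
  rw [hunion, Nat.card_divisorsAntidiagonal] at this
  omega

lemma Nat.exists_prime_mul_dvd_of_dvd_of_ne {a N : ℕ} (h : a ∣ N) (hne : a ≠ N) :
    ∃ r, r.Prime ∧ a * r ∣ N := by
  obtain ⟨k, rfl⟩ := h
  have hk : k ≠ 1 := by rintro rfl; exact hne (mul_one a).symm
  exact ⟨k.minFac, Nat.minFac_prime hk, mul_dvd_mul_left a (Nat.minFac_dvd k)⟩

section TwoPrimes

variable {p q : ℕ} (hp : p.Prime) (hq : q.Prime) (hpq : p ≠ q)
include hp hq hpq

lemma Nat.card_divisors_prime_pow_mul_prime_pow (i j : ℕ) :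
    #(p ^ i * q ^ j).divisors = (i + 1) * (j + 1) := by
  rw [Nat.Coprime.card_divisors_mul (((Nat.coprime_primes hp hq).mpr hpq).pow i j),
    Nat.divisors_prime_pow hp, Nat.divisors_prime_pow hq]
  simp

lemma Nat.card_divisors_le_of_mul_prime_dvd {i j a : ℕ} (hi : 1 ≤ i)
    (h : a * p ∣ p ^ i * q ^ j) : #a.divisors ≤ i * (j + 1) := by
  have hdvd : a ∣ p ^ (i - 1) * q ^ j := by
    refine Nat.dvd_of_mul_dvd_mul_right hp.pos ?_
    rwa [mul_right_comm, ← pow_succ, Nat.sub_add_cancel hi]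
  have hne : p ^ (i - 1) * q ^ j ≠ 0 := by positivity [hp.pos, hq.pos]
  calc #a.divisors ≤ #(p ^ (i - 1) * q ^ j).divisors :=
        card_le_card (Nat.divisors_subset_of_dvd hne hdvd)
    _ = i * (j + 1) := by
        rw [Nat.card_divisors_prime_pow_mul_prime_pow hp hq hpq, Nat.sub_add_cancel hi]

lemma Nat.card_divisors_le_of_dvd_of_ne {i j a : ℕ} (hi : 1 ≤ i) (hj : 1 ≤ j)
    (hdvd : a ∣ p ^ i * q ^ j) (hne : a ≠ p ^ i * q ^ j) :
    #a.divisors ≤ max (i * (j + 1)) ((i + 1) * j) := by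
  obtain ⟨r, hr, hdvd⟩ := Nat.exists_prime_mul_dvd_of_dvd_of_ne hdvd hne
  have hr_dvd : r ∣ p ^ i * q ^ j := (dvd_mul_left r a).trans hdvd
  rcases (Nat.Prime.dvd_mul hr).mp hr_dvd with h | h
  · obtain rfl := (Nat.prime_dvd_prime_iff_eq hr hp).mp (hr.dvd_of_dvd_pow h)
    exact (Nat.card_divisors_le_of_mul_prime_dvd hp hq hpq hi hdvd).trans (le_max_left _ _)
  · obtain rfl := (Nat.prime_dvd_prime_iff_eq hr hq).mp (hr.dvd_of_dvd_pow h)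
    rw [mul_comm (p ^ i)] at hdvd
    calc #a.divisors ≤ j * (i + 1) :=
          Nat.card_divisors_le_of_mul_prime_dvd hq hp hpq.symm hj hdvd
      _ ≤ _ := by rw [mul_comm]; exact le_max_right _ _

end TwoPrimes

namespace Mondrian.IsPerfect

variable {n : ℕ} {P : Mondrian n} (hP : P.IsPerfect)
include hP

lemma area_mul_card {r : Rect} (hr : r ∈ P.rects) : r.area * #P.rects = n * n := by
  rw [← P.sum_area, sum_congr rfl fun s hs => hP s hs r hr, sum_const, smul_eq_mul, mul_comm]

lemma two_mul_card_le {r : Rect} (hr : r ∈ P.rects) :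
    2 * #P.rects ≤ #r.area.divisors + 1 := by
  have harea : r.area ≠ 0 := Nat.mul_ne_zero (P.pos r hr).1.ne' (P.pos r hr).2.ne'
  have hmaps : ∀ s ∈ P.rects, s.shape ∈ {x ∈ r.area.divisorsAntidiagonal | x.1 ≤ x.2} := by
    intro s hs
    rw [mem_filter, ← hP s hs r hr]
    exact ⟨Rect.shape_mem_divisorsAntidiagonal (hP s hs r hr ▸ harea), s.shape_fst_le_snd⟩
  have hinj : Set.InjOn Rect.shape P.rects := fun s hs t ht hst => by
    by_contra hne
    exact P.noncong s hs t ht hne (Rect.congruent_of_shape_eq hst)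
  have := card_le_card_of_injOn Rect.shape hmaps hinj
  have := Nat.two_mul_card_filter_fst_le_snd_le r.area
  omega

lemma two_mul_card_le_of_mul_self_eq {p q i j : ℕ} (hp : p.Prime) (hq : q.Prime)
    (hpq : p ≠ q) (hi : 1 ≤ i) (hj : 1 ≤ j) (hn : n * n = p ^ i * q ^ j)
    (hk : 2 ≤ #P.rects) : 2 * #P.rects ≤ max (i * (j + 1)) ((i + 1) * j) + 1 := by
  obtain ⟨r, hr⟩ := card_pos.mp (by omega : 0 < #P.rects)
  have hak := hP.area_mul_card hr
  rw [hn] at hak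
  have hne : r.area ≠ p ^ i * q ^ j := fun h => by
    have hpos : 0 < p ^ i * q ^ j := by positivity [hp.pos, hq.pos]
    rw [h] at hak
    have := Nat.eq_of_mul_eq_mul_left hpos (hak.trans (mul_one _).symm)
    omega
  have := Nat.card_divisors_le_of_dvd_of_ne hp hq hpq hi hj (Dvd.intro _ hak) hne
  have := hP.two_mul_card_le hr
  omega

end Mondrian.IsPerfect

/-- If `p₁ < p₂` are primes with `p₁ > 8`, then the square of side
`n = p₁²·p₂` has no perfect Mondrian partition into `k ≥ p₁` rectangles;
if `p₁ > 6`, then the square of side `n = p₁·p₂²` has no perfect Mondrian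
partition into `k ≥ p₁` rectangles. -/
theorem no_perfect_three_almost_prime (p₁ p₂ : ℕ) (hp₁ : p₁.Prime)
    (hp₂ : p₂.Prime) (hlt : p₁ < p₂) :
    (8 < p₁ → ∀ P : Mondrian (p₁ ^ 2 * p₂), p₁ ≤ P.rects.card → ¬ P.IsPerfect) ∧
    (6 < p₁ → ∀ P : Mondrian (p₁ * p₂ ^ 2), p₁ ≤ P.rects.card → ¬ P.IsPerfect) := by
  constructor
  · intro h8 P hk hP
    have := hP.two_mul_card_le_of_mul_self_eq (i := 4) (j := 2) hp₁ hp₂ hlt.ne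
      (by norm_num) (by norm_num) (by ring) (by omega)
    omega
  · intro h6 P hk hP
    have := hP.two_mul_card_le_of_mul_self_eq (i := 2) (j := 4) hp₁ hp₂ hlt.ne
      (by norm_num) (by norm_num) (by ring) (by omega)
    omega
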